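/- arXiv:1201.5322 — 2 statements merged into one kernel-verified Lean document; each statement's English description precedes it below -/
import Mathlib

section
/- In the unrestricted wreath product G Wr ℤ, let π_g ∈ G^ℤ be defined by π_g(i) = g for i ≥ 0 and π_g(i) = 1 for i < 0, and let c denote the generator of the acting copy of ℤ. Then for every g ∈ G, the element δ_0(g) of the base group (the function equal to g at position 0 and 1 elsewhere) lies in the derived (commutator) subgroup of the subgroup D = ⟨{π_g : g ∈ G} ∪ {c}⟩. -/
/-- The action of `H` on the full direct product `H → G` by permuting coordinates. -/
def permAction (G H : Type*) [Group G] [Group H] : H →* MulAut (H → G) where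
  toFun h :=
    { toFun := fun f x => f (h⁻¹ * x)
      invFun := fun f x => f (h * x)
      left_inv := fun f => funext fun x => by simp
      right_inv := fun f => funext fun x => by simp
      map_mul' := fun f g => rfl }
  map_one' := by
    apply MulEquiv.ext
    intro f; funext x; simp
  map_mul' := fun h₁ h₂ => by
    apply MulEquiv.ext
    intro f; funext x
    simp [mul_assoc]

/-- The unrestricted wreath product `G Wr ℤ` (with `ℤ` written multiplicatively). -/
abbrev WreathZ (G : Type*) [Group G] :=
  (Multiplicative ℤ → G) ⋊[permAction G (Multiplicative ℤ)] Multiplicative ℤ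

/-- The "half-infinite constant" element `π_g` of the base group: `g` at all
coordinates `i ≥ 0` and `1` at coordinates `i < 0`. -/
def piElt {G : Type*} [Group G] (g : G) : Multiplicative ℤ → G :=
  fun x => if 0 ≤ x.toAdd then g else 1

/-- The element `δ₀ g` of the base group: `g` at coordinate `0` and `1` elsewhere. -/
def deltaElt {G : Type*} [Group G] (g : G) : Multiplicative ℤ → G :=
  fun x => if x.toAdd = 0 then g else 1

/-! `δ₀ g` is the commutator `⁅π_g, c⁆ = π_g · (c • π_g)⁻¹`: the shifted copy `c • π_g` agrees with
`π_g` everywhere except at coordinate `0`, where it is `1`. -/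

open scoped commutatorElement

theorem SemidirectProduct.commutatorElement_inl_inr {N H : Type*} [Group N] [Group H]
    {φ : H →* MulAut N} (n : N) (h : H) :
    ⁅(inl n : N ⋊[φ] H), (inr h : N ⋊[φ] H)⁆ = inl (n * φ h n⁻¹) := by
  rw [commutatorElement_def, map_mul, inl_aut]
  simp only [map_inv]
  group

@[simp]
theorem permAction_apply (G H : Type*) [Group G] [Group H] (h : H) (f : H → G) (x : H) :
    permAction G H h f x = f (h⁻¹ * x) :=
  rfl

theorem piElt_mul_shift_inv_eq_deltaElt {G : Type*} [Group G] (g : G) :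
    piElt g * permAction G (Multiplicative ℤ) (.ofAdd 1) (piElt g)⁻¹ = deltaElt g := by
  funext x
  simp only [Pi.mul_apply, permAction_apply, Pi.inv_apply, piElt, deltaElt, toAdd_mul, toAdd_inv,
    toAdd_ofAdd]
  split_ifs <;> first | omega | simp

/-- For every `g`, the element `δ₀ g` of the base group lies in the derived
(commutator) subgroup of `D = ⟨{π_g : g ∈ G} ∪ {c}⟩`, where `c` is the shift
generator of the acting copy of `ℤ`. -/
theorem delta_mem_commutator_of_D (G : Type*) [Group G] (g : G) :
    SemidirectProduct.inl (deltaElt g) ∈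
      ⁅(Subgroup.closure ((Set.range fun g : G => (SemidirectProduct.inl (piElt g) : WreathZ G))
          ∪ {SemidirectProduct.inr (Multiplicative.ofAdd (1 : ℤ))})),
        (Subgroup.closure ((Set.range fun g : G => (SemidirectProduct.inl (piElt g) : WreathZ G))
          ∪ {SemidirectProduct.inr (Multiplicative.ofAdd (1 : ℤ))}))⁆ := by
  rw [← piElt_mul_shift_inv_eq_deltaElt, ← SemidirectProduct.commutatorElement_inl_inr]
  exact Subgroup.commutator_mem_commutator (Subgroup.subset_closure (.inl ⟨g, rfl⟩))
    (Subgroup.subset_closure (.inr rfl))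
end

section
/- Every countable group embeds into a group generated by two elements. -/
/-!
Hall's argument. In `W = K Wr ℤ` the element `δ₀ g` is the commutator of the shift `t` with the
base element `β g` equal to `g⁻¹` on `[0, ∞)`. List `t, β g₀, β g₁, …` as `x 0, x 1, …` and let
`ω ∈ W Wr ℤ` carry `x k` at `2 ^ k`. As `2 ^ b - 2 ^ a = 2 ^ (k + 1) - 1` forces `a = 0` and
`b = k + 1`, the commutator of `ω` with its translate by `2 ^ (k + 1) - 1` lives at the single
point `2 ^ (k + 1)`, with value `⁅t, β gₖ⁆ = δ₀ gₖ`; conjugating by a power of the shift moves it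
to `0`. Hence `⟨ω, shift⟩` contains `δ₀ (δ₀ g)` for every `g`.
-/

open SemidirectProduct Multiplicative Function
open scoped commutatorElement

universe u

theorem two_pow_add_two_pow_eq {a b k : ℕ} (h : 2 ^ a + 2 ^ (k + 1) = 2 ^ b + 1) :
    a = 0 ∧ b = k + 1 := by
  rcases a with _ | a
  · simp only [pow_zero, add_comm 1, add_left_inj] at h
    exact ⟨rfl, (Nat.pow_right_injective le_rfl h).symm⟩
  · have hb : b = 0 := by simpa [Nat.even_add, Nat.even_pow] using congrArg Even h
    subst hb
    have := Nat.one_le_two_pow (n := a)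
    have := Nat.one_le_two_pow (n := k)
    rw [pow_succ, pow_succ] at h
    linarith

section Shift

variable (K : Type*) [Group K]

def IntWreath.shift : Multiplicative ℤ →* MulAut (ℤ → K) where
  toFun s :=
    { toFun := fun f n => f (n - s.toAdd)
      invFun := fun f n => f (n + s.toAdd)
      left_inv := fun f => by simp
      right_inv := fun f => by simp
      map_mul' := fun _ _ => rfl }
  map_one' := by ext; simp
  map_mul' := fun _ _ => by ext; simp [sub_sub]

/-- The unrestricted wreath product `K Wr ℤ`. -/
abbrev IntWreath := (ℤ → K) ⋊[IntWreath.shift K] Multiplicative ℤ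

end Shift

namespace IntWreath

variable {K : Type*} [Group K]

@[simp]
lemma shift_apply (s : Multiplicative ℤ) (f : ℤ → K) (n : ℤ) :
    shift K s f n = f (n - s.toAdd) := rfl

lemma shift_mulSingle (p : ℤ) (z : K) :
    shift K (ofAdd p) (Pi.mulSingle 0 z) = Pi.mulSingle p z := by
  ext n
  simp [Pi.mulSingle_apply, sub_eq_zero]

lemma commutatorElement_shift_eq_mulSingle (f : ℤ → K) {p s : ℤ}
    (hf : ∀ n ≠ p + s, f (n - s) = 1 ∨ f n = 1) :
    ⁅shift K (ofAdd s) f, f⁆ = Pi.mulSingle (p + s) ⁅f p, f (p + s)⁆ := by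
  ext n
  by_cases hn : n = p + s
  · subst hn
    simp [commutatorElement_def]
  · rcases hf n hn with h | h <;> simp [commutatorElement_def, h, hn]

variable (K) in
def gen : IntWreath K := inr (ofAdd 1)

variable (K) in
def single : K →* IntWreath K := inl.comp (MonoidHom.mulSingle (fun _ : ℤ => K) 0)

lemma single_injective : Injective (single K) :=
  inl_injective.comp (Pi.mulSingle_injective (M := fun _ : ℤ => K) 0)

lemma inl_shift (s : ℤ) (f : ℤ → K) :
    inl (shift K (ofAdd s) f) = gen K ^ s * inl f * (gen K ^ s)⁻¹ := by
  rw [inl_aut, gen, ← map_zpow, ← ofAdd_zsmul, smul_eq_mul, mul_one, map_inv]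

lemma inl_mulSingle (p : ℤ) (z : K) :
    inl (Pi.mulSingle p z) = gen K ^ p * single K z * (gen K ^ p)⁻¹ := by
  rw [← shift_mulSingle, inl_shift]
  rfl

lemma single_commutatorElement_mem_closure (f : ℤ → K) {p s : ℤ}
    (hf : ∀ n ≠ p + s, f (n - s) = 1 ∨ f n = 1) :
    single K ⁅f p, f (p + s)⁆ ∈ Subgroup.closure {inl f, gen K} := by
  have hf' : single K ⁅f p, f (p + s)⁆ =
      (gen K ^ (p + s))⁻¹ * ⁅gen K ^ s * inl f * (gen K ^ s)⁻¹, inl f⁆ * gen K ^ (p + s) := by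
    rw [← inl_shift, ← map_commutatorElement, commutatorElement_shift_eq_mulSingle f hf,
      inl_mulSingle]
    group
  have hA : inl f ∈ Subgroup.closure {inl f, gen K} := Subgroup.subset_closure (by simp)
  have hT : gen K ∈ Subgroup.closure {inl f, gen K} := Subgroup.subset_closure (by simp)
  rw [hf', commutatorElement_def]
  apply_rules [mul_mem, inv_mem, zpow_mem]

def stepFn (g : K) : ℤ → K := fun n => if 0 ≤ n then g⁻¹ else 1

lemma commutatorElement_gen_inl_stepFn (g : K) : ⁅gen K, inl (stepFn g)⁆ = single K g := by
  have h := inl_shift 1 (stepFn g)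
  rw [zpow_one] at h
  rw [commutatorElement_def, ← h, ← map_inv, ← map_mul]
  refine congrArg inl (funext fun n => ?_)
  simp only [Pi.mul_apply, Pi.inv_apply, shift_apply, toAdd_ofAdd, stepFn]
  rcases lt_trichotomy n 0 with hn | rfl | hn
  · simp [hn.ne, show ¬ 1 ≤ n by omega, show ¬ 0 ≤ n by omega]
  · simp
  · simp [hn.ne', show 1 ≤ n by omega, hn.le]

/-- Hall's element: `x k` at `2 ^ k`, trivial off the powers of two. -/
noncomputable def hallElement (x : ℕ → K) : ℤ → K :=
  extend (fun k : ℕ => (2 : ℤ) ^ k) x (1 : ℤ → K)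

lemma hallElement_two_pow (x : ℕ → K) (k : ℕ) : hallElement x (2 ^ k) = x k :=
  (pow_right_injective₀ two_pos (by norm_num)).extend_apply x (1 : ℤ → K) k

lemma exists_two_pow_eq_of_hallElement_ne_one {x : ℕ → K} {n : ℤ} (h : hallElement x n ≠ 1) :
    ∃ k : ℕ, 2 ^ k = n :=
  not_imp_comm.mp (extend_apply' x (1 : ℤ → K) n) h

lemma hallElement_sub_eq_one_or_eq_one (x : ℕ → K) (k : ℕ) :
    ∀ n ≠ 1 + (2 ^ (k + 1) - 1),
      hallElement x (n - (2 ^ (k + 1) - 1)) = 1 ∨ hallElement x n = 1 := by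
  intro n hn
  by_contra! ⟨hsub, hn'⟩
  obtain ⟨a, ha⟩ := exists_two_pow_eq_of_hallElement_ne_one hsub
  obtain ⟨b, rfl⟩ := exists_two_pow_eq_of_hallElement_ne_one hn'
  have hab : 2 ^ a + 2 ^ (k + 1) = 2 ^ b + 1 := by
    have : (2 : ℤ) ^ a + 2 ^ (k + 1) = 2 ^ b + 1 := by linarith
    exact_mod_cast this
  obtain ⟨-, rfl⟩ := two_pow_add_two_pow_eq hab
  exact hn (by ring)

lemma single_commutatorElement_mem_closure_hallElement (x : ℕ → K) (k : ℕ) :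
    single K ⁅x 0, x (k + 1)⁆ ∈ Subgroup.closure {inl (hallElement x), gen K} := by
  have h := single_commutatorElement_mem_closure _ (hallElement_sub_eq_one_or_eq_one x k)
  rwa [add_sub_cancel, ← pow_zero (2 : ℤ), hallElement_two_pow, hallElement_two_pow] at h

variable (K) in
def hallSeq (e : ℕ → K) : ℕ → IntWreath K
  | 0 => gen K
  | k + 1 => inl (stepFn (e k))

lemma single_single_mem_closure (e : ℕ → K) (k : ℕ) :
    single (IntWreath K) (single K (e k)) ∈
      Subgroup.closure {inl (hallElement (hallSeq K e)), gen (IntWreath K)} := by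
  rw [← commutatorElement_gen_inl_stepFn (e k)]
  exact single_commutatorElement_mem_closure_hallElement _ k

end IntWreath

lemma exists_twoGenerated_of_forall_mem_closure {G L : Type u} [Group G] [Group L] (φ : G →* L)
    (hφ : Injective φ) {a b : L} (h : ∀ g, φ g ∈ Subgroup.closure {a, b}) :
    ∃ (H : GrpCat.{u}) (a b : H) (ψ : G →* H),
      Subgroup.closure {a, b} = ⊤ ∧ Injective ψ := by
  refine ⟨GrpCat.of (Subgroup.closure {a, b}), ⟨a, Subgroup.subset_closure (by simp)⟩,
    ⟨b, Subgroup.subset_closure (by simp)⟩, φ.codRestrict _ h, ?_, fun g g' hg => hφ congr(($hg).1)⟩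
  convert Subgroup.closure_closure_coe_preimage (k := {a, b}) using 2
  ext
  simp [Subtype.ext_iff]

open IntWreath in
/-- Every countable group embeds into a group generated by two elements. -/
theorem countable_group_embeds_two_generator (G : Type u) [Group G] [Countable G] :
    ∃ (H : GrpCat.{u}) (a b : H) (φ : G →* H),
      Subgroup.closure {a, b} = ⊤ ∧ Function.Injective φ := by
  obtain ⟨e, he⟩ := exists_surjective_nat G
  refine exists_twoGenerated_of_forall_mem_closure ((single _).comp (single G))
    (single_injective.comp single_injective) (a := inl (hallElement (hallSeq G e)))
    (b := gen _) fun g => ?_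
  obtain ⟨k, rfl⟩ := he g
  exact single_single_mem_closure e k
end
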